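/- For every Z/p persistence module V, the distance κ(V) from V to the set of full p-th power Z/p persistence modules (measured in equivariant interleaving distance) is at least the multiplicity-sensitive spread: κ(V) ≥ μ_p(V). -/
import Mathlib


universe u

/-- A `ℤ/p` persistence module over a field `K`: a compactly supported, pointwise
finite-dimensional persistence module `(V, θ)` of `K`-vector spaces indexed by `ℝ`
together with an automorphism `A` of persistence modules satisfying `A ^ p = id`. -/
structure ZpPersMod (K : Type u) [Field K] (p : ℕ) : Type (u + 1) where
  V : ℝ → Type u
  [addgrp : ∀ t, AddCommGroup (V t)]
  [mod : ∀ t, Module K (V t)]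
  [fd : ∀ t, FiniteDimensional K (V t)]
  θ : ∀ s t : ℝ, V s →ₗ[K] V t
  θ_id : ∀ t, θ t t = LinearMap.id
  θ_comp : ∀ s t r : ℝ, s ≤ t → t ≤ r → (θ t r).comp (θ s t) = θ s r
  supp : ∃ T : ℝ, ∀ t : ℝ, T < |t| → ∀ v : V t, v = 0
  A : ∀ t, V t →ₗ[K] V t
  hAθ : ∀ s t : ℝ, (A t).comp (θ s t) = (θ s t).comp (A s)
  hAp : ∀ t, (A t) ^ p = 1

attribute [instance] ZpPersMod.addgrp ZpPersMod.mod ZpPersMod.fd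

variable (K : Type u) [Field K] (p : ℕ)

/-- The multiplicity function of the barcode of the `ζ`-eigenspace persistence
module of `M`: the number of bars containing the interval `(a, b]`, i.e. the rank
of the persistence map of the `ζ`-eigenspace module from `a` to `b`. -/
noncomputable def eigMult (M : ZpPersMod K p) (ζ : K) (a b : ℝ) : ℕ :=
  Module.finrank K
    ((LinearMap.ker (M.A a - ζ • (1 : M.V a →ₗ[K] M.V a))).map (M.θ a b))

/-- The multiplicity-sensitive spread `μ_p` of a `ℤ/p` persistence module: the
supremum, over primitive `p`-th roots of unity `ζ` and constants `c ≥ 0`, of those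
`c` for which there is an interval `I` of length `> 4c` with
`m(B(L_ζ), I) = m(B(L_ζ), I^{2c}) = l` and `l` not divisible by `p`. -/
noncomputable def muP (M : ZpPersMod K p) : ℝ :=
  sSup {c : ℝ | 0 ≤ c ∧ ∃ ζ : K, IsPrimitiveRoot ζ p ∧ ∃ a b : ℝ,
    4 * c < b - a ∧
    eigMult K p M ζ a b = eigMult K p M ζ (a + 2 * c) (b - 2 * c) ∧
    ¬ p ∣ eigMult K p M ζ a b}

/-- An equivariant `δ`-interleaving between `ℤ/p` persistence modules `M` and `N`:
an interleaving in the usual sense which commutes with the `ℤ/p`-actions. -/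
structure EquivInterleaving (M N : ZpPersMod K p) (δ : ℝ) : Type u where
  f : ∀ t : ℝ, M.V t →ₗ[K] N.V (t + δ)
  g : ∀ t : ℝ, N.V t →ₗ[K] M.V (t + δ)
  f_nat : ∀ s t : ℝ, s ≤ t → (f t).comp (M.θ s t) = (N.θ (s + δ) (t + δ)).comp (f s)
  g_nat : ∀ s t : ℝ, s ≤ t → (g t).comp (N.θ s t) = (M.θ (s + δ) (t + δ)).comp (g s)
  f_equiv : ∀ t : ℝ, (f t).comp (M.A t) = (N.A (t + δ)).comp (f t)
  g_equiv : ∀ t : ℝ, (g t).comp (N.A t) = (M.A (t + δ)).comp (g t)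
  gf : ∀ t : ℝ, (g (t + δ)).comp (f t) = M.θ t (t + δ + δ)
  fg : ∀ t : ℝ, (f (t + δ)).comp (g t) = N.θ t (t + δ + δ)

/-- The equivariant interleaving distance between `ℤ/p` persistence modules. -/
noncomputable def dHatInter (M N : ZpPersMod K p) : ℝ :=
  sInf {δ : ℝ | 0 < δ ∧ Nonempty (EquivInterleaving K p M N δ)}

/-- A `ℤ/p` persistence module is a full `p`-th power if its structure automorphism
is `B ^ p` for some endomorphism `B` of the persistence module. -/
def IsFullPthPower (M : ZpPersMod K p) : Prop :=
  ∃ B : ∀ t : ℝ, M.V t →ₗ[K] M.V t,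
    (∀ s t : ℝ, (B t).comp (M.θ s t) = (M.θ s t).comp (B s)) ∧
    ∀ t : ℝ, (B t) ^ p = M.A t

/-- The distance `κ(M)` from a `ℤ/p` persistence module `M` to the set of full
`p`-th power `ℤ/p` persistence modules, in equivariant interleaving distance. -/
noncomputable def kappa (M : ZpPersMod K p) : ℝ :=
  sInf {d : ℝ | ∃ W : ZpPersMod K p, IsFullPthPower K p W ∧ dHatInter K p M W = d}


variable {K} {p}

lemma mem_eig_iff (M : ZpPersMod K p) (ζ : K) (s : ℝ) (x : M.V s) :
    x ∈ LinearMap.ker (M.A s - ζ • (1 : M.V s →ₗ[K] M.V s)) ↔ M.A s x = ζ • x := by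
  simp [LinearMap.mem_ker, LinearMap.sub_apply, LinearMap.smul_apply, Module.End.one_apply,
    sub_eq_zero]

lemma eig_map_theta (M : ZpPersMod K p) (ζ : K) (s t : ℝ) :
    (LinearMap.ker (M.A s - ζ • (1 : M.V s →ₗ[K] M.V s))).map (M.θ s t)
      ≤ LinearMap.ker (M.A t - ζ • (1 : M.V t →ₗ[K] M.V t)) := by
  rintro x ⟨v, hv, rfl⟩
  rw [SetLike.mem_coe] at hv
  rw [mem_eig_iff] at hv ⊢
  have h := LinearMap.congr_fun (M.hAθ s t) v
  simp only [LinearMap.comp_apply] at h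
  rw [h, hv, map_smul]

lemma eigMult_mono (M : ZpPersMod K p) (ζ : K) {a a' b' b : ℝ}
    (h1 : a ≤ a') (h2 : a' ≤ b') (h3 : b' ≤ b) :
    eigMult K p M ζ a b ≤ eigMult K p M ζ a' b' := by
  have hθ : M.θ a b = (M.θ b' b).comp ((M.θ a' b').comp (M.θ a a')) := by
    rw [← LinearMap.comp_assoc, M.θ_comp a' b' b h2 h3, M.θ_comp a a' b h1 (h2.trans h3)]
  unfold eigMult
  rw [hθ, Submodule.map_comp, Submodule.map_comp]
  calc Module.finrank K ((((LinearMap.ker (M.A a - ζ • 1)).map (M.θ a a')).map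
        (M.θ a' b')).map (M.θ b' b))
      ≤ Module.finrank K (((LinearMap.ker (M.A a - ζ • 1)).map (M.θ a a')).map (M.θ a' b')) :=
        Submodule.finrank_map_le _ _
    _ ≤ Module.finrank K ((LinearMap.ker (M.A a' - ζ • 1)).map (M.θ a' b')) :=
        Submodule.finrank_mono (Submodule.map_mono (eig_map_theta M ζ a a'))

def EquivInterleaving.symm {M N : ZpPersMod K p} {δ : ℝ} (I : EquivInterleaving K p M N δ) :
    EquivInterleaving K p N M δ :=
  ⟨I.g, I.f, I.g_nat, I.f_nat, I.g_equiv, I.f_equiv, I.fg, I.gf⟩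

lemma eig_map_f {M N : ZpPersMod K p} {δ : ℝ} (I : EquivInterleaving K p M N δ) (ζ : K) (s : ℝ) :
    (LinearMap.ker (M.A s - ζ • (1 : M.V s →ₗ[K] M.V s))).map (I.f s)
      ≤ LinearMap.ker (N.A (s + δ) - ζ • (1 : N.V (s + δ) →ₗ[K] N.V (s + δ))) := by
  rintro x ⟨v, hv, rfl⟩
  rw [SetLike.mem_coe] at hv
  rw [mem_eig_iff] at hv ⊢
  have h := LinearMap.congr_fun (I.f_equiv s) v
  simp only [LinearMap.comp_apply] at h
  rw [← h, hv, map_smul]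

lemma eigMult_le_across {M N : ZpPersMod K p} {δ : ℝ} (hδ : 0 < δ)
    (I : EquivInterleaving K p M N δ) (ζ : K) (s t : ℝ) (h : s + δ ≤ t) :
    eigMult K p M ζ s (t + δ) ≤ eigMult K p N ζ (s + δ) t := by
  have hθ : M.θ s (t + δ) = (I.g t).comp ((N.θ (s + δ) t).comp (I.f s)) := by
    rw [← LinearMap.comp_assoc, I.g_nat (s + δ) t h, LinearMap.comp_assoc, I.gf s,
      M.θ_comp s (s + δ + δ) (t + δ) (by linarith) (by linarith)]
  unfold eigMult
  rw [hθ, Submodule.map_comp, Submodule.map_comp]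
  calc Module.finrank K ((((LinearMap.ker (M.A s - ζ • 1)).map (I.f s)).map
        (N.θ (s + δ) t)).map (I.g t))
      ≤ Module.finrank K (((LinearMap.ker (M.A s - ζ • 1)).map (I.f s)).map (N.θ (s + δ) t)) :=
        Submodule.finrank_map_le _ _
    _ ≤ Module.finrank K ((LinearMap.ker (N.A (s + δ) - ζ • 1)).map (N.θ (s + δ) t)) :=
        Submodule.finrank_mono (Submodule.map_mono (eig_map_f I ζ s))

open Polynomial in
lemma dvd_eigMult_of_fullPthPower (hp : p.Prime) (W : ZpPersMod K p)
    (hW : IsFullPthPower K p W) (ζ : K) (hζ1 : ∀ x : K, x ^ p ≠ ζ) (a b : ℝ) :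
    p ∣ eigMult K p W ζ a b := by
  obtain ⟨B, hBθ, hBp⟩ := hW
  set U : Submodule K (W.V b) :=
    (LinearMap.ker (W.A a - ζ • (1 : W.V a →ₗ[K] W.V a))).map (W.θ a b) with hUdef
  have hBA : ∀ t, W.A t * B t = B t * W.A t := fun t => by
    rw [← hBp t, ← pow_succ, pow_succ']
  have hmapsto : ∀ x ∈ U, B b x ∈ U := by
    rintro x ⟨v, hv, rfl⟩
    rw [SetLike.mem_coe, mem_eig_iff] at hv
    refine ⟨B a v, ?_, (LinearMap.congr_fun (hBθ a b) v).symm⟩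
    rw [SetLike.mem_coe, mem_eig_iff]
    have h := LinearMap.congr_fun (hBA a) v
    simp only [Module.End.mul_apply] at h
    rw [h, hv, map_smul]
  have hUeig : ∀ x ∈ U, W.A b x = ζ • x := fun x hx =>
    (mem_eig_iff W ζ b x).mp (eig_map_theta W ζ a b hx)
  set φ : ↥U →ₗ[K] ↥U := (B b).restrict hmapsto with hφdef
  have hφp : φ ^ p = algebraMap K (Module.End K ↥U) ζ := by
    ext x
    have h1 : ((φ ^ p) x : W.V b) = ((B b) ^ p) (x : W.V b) := by
      rw [hφdef, Module.End.pow_restrict, LinearMap.restrict_coe_apply]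
    rw [h1, hBp b, hUeig x x.2]
    simp [Module.algebraMap_end_apply]
  -- the field K[X]/(X^p - ζ)
  have hirr : Irreducible (X ^ p - C ζ : K[X]) := X_pow_sub_C_irreducible_of_prime hp hζ1
  haveI : Fact (Irreducible (X ^ p - C ζ : K[X])) := ⟨hirr⟩
  set q : K[X] := X ^ p - C ζ with hqdef
  have haq : aeval φ q = 0 := by
    rw [hqdef]
    rw [map_sub, map_pow, aeval_X, aeval_C, hφp, sub_self]
  have hspan : ∀ x : K[X], x ∈ Ideal.span {q} → (aeval φ).toRingHom x = 0 := by
    intro x hx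
    obtain ⟨c, rfl⟩ := Ideal.mem_span_singleton.mp hx
    simp only [AlgHom.toRingHom_eq_coe, RingHom.coe_coe, map_mul, haq, zero_mul]
  set ρ : AdjoinRoot q →+* Module.End K ↥U :=
    Ideal.Quotient.lift (Ideal.span {q}) (aeval φ).toRingHom hspan with hρdef
  have hρmk : ∀ x : K[X], ρ (AdjoinRoot.mk q x) = aeval φ x := fun x =>
    Ideal.Quotient.lift_mk _ _ _
  set L := AdjoinRoot q with hLdef
  letI : Module L ↥U := Module.compHom ↥U ρ
  haveI : IsScalarTower K L ↥U := by
    constructor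
    intro k l u
    obtain ⟨x, rfl⟩ := AdjoinRoot.mk_surjective l
    have h1 : k • AdjoinRoot.mk q x = AdjoinRoot.mk q (C k * x) := by
      rw [map_mul, Algebra.smul_def, AdjoinRoot.algebraMap_eq, AdjoinRoot.of, RingHom.comp_apply]
    show ρ (k • AdjoinRoot.mk q x) u = k • (ρ (AdjoinRoot.mk q x)) u
    rw [h1, hρmk, hρmk, map_mul, aeval_C, Module.End.mul_apply, Module.algebraMap_end_apply]
  have htower : Module.finrank K L * Module.finrank L ↥U = Module.finrank K ↥U :=
    Module.finrank_mul_finrank K L ↥U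
  have hdim : Module.finrank K L = p := by
    rw [(AdjoinRoot.powerBasis hirr.ne_zero).finrank]
    show q.natDegree = p
    rw [hqdef, natDegree_X_pow_sub_C]
  exact ⟨Module.finrank L ↥U, by unfold eigMult; rw [← hUdef, ← htower, hdim]⟩

-- the zero module
lemma botv_zero (v : ↥(⊥ : Submodule K K)) : v = 0 :=
  Subtype.ext ((Submodule.mem_bot K).mp v.2)

lemma map_ext0 {M N : Type u} [AddCommGroup M] [Module K M] [AddCommGroup N] [Module K N]
    (h : ∀ v : N, v = 0) (f g : M →ₗ[K] N) : f = g :=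
  LinearMap.ext fun x => (h (f x)).trans (h (g x)).symm

variable (K p) in
noncomputable def zeroMod : ZpPersMod K p where
  V _ := ↥(⊥ : Submodule K K)
  θ _ _ := 0
  θ_id t := map_ext0 botv_zero _ _
  θ_comp _ _ _ _ _ := map_ext0 botv_zero _ _
  supp := ⟨0, fun _ _ v => botv_zero v⟩
  A _ := 1
  hAθ _ _ := map_ext0 botv_zero _ _
  hAp _ := one_pow p

lemma zeroMod_isFullPthPower : IsFullPthPower K p (zeroMod K p) :=
  ⟨fun _ => 1, fun _ _ => map_ext0 botv_zero _ _, fun _ => one_pow p⟩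

lemma theta_large_zero (M : ZpPersMod K p) {T : ℝ}
    (hT : ∀ t : ℝ, T < |t| → ∀ v : M.V t, v = 0)
    {δ : ℝ} (hδ : T + 1 ≤ δ) (t : ℝ) : M.θ t (t + δ + δ) = 0 := by
  apply LinearMap.ext; intro v
  rcases lt_or_ge T |t| with h | h
  · rw [hT t h v]; simp
  · have habs : T < |t + δ + δ| := by
      have h1 : -T ≤ t := (abs_le.mp h).1
      have h2 : T < t + δ + δ := by linarith
      exact h2.trans_le (le_abs_self _)
    show (M.θ t (t + δ + δ)) v = 0
    exact hT _ habs _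

lemma exists_interleaving (M N : ZpPersMod K p) :
    ∃ δ : ℝ, 0 < δ ∧ Nonempty (EquivInterleaving K p M N δ) := by
  obtain ⟨TM, hTM⟩ := M.supp
  obtain ⟨TN, hTN⟩ := N.supp
  set δ : ℝ := max (max TM TN) 0 + 1 with hδdef
  have hδM : TM + 1 ≤ δ := by
    have := (le_max_left TM TN).trans (le_max_left (max TM TN) 0)
    linarith
  have hδN : TN + 1 ≤ δ := by
    have := (le_max_right TM TN).trans (le_max_left (max TM TN) 0)
    linarith
  have hδ0 : 0 < δ := by
    have := le_max_right (max TM TN) 0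
    linarith
  refine ⟨δ, hδ0, ⟨⟨fun _ => 0, fun _ => 0, ?_, ?_, ?_, ?_, ?_, ?_⟩⟩⟩
  · intros; simp
  · intros; simp
  · intros; simp
  · intros; simp
  · intro t; rw [theta_large_zero M hTM hδM t]; simp
  · intro t; rw [theta_large_zero N hTN hδN t]; simp

variable (K) (p)

/-- For every `ℤ/p` persistence module `V` (over a field `K` with
`char K ≠ p`, containing a primitive `p`-th root of unity, in which `x^p = ζ^q` has
no solution for `p ∤ q`), the distance to the set of full `p`-th powers is bounded
below by the multiplicity-sensitive spread: `κ(V) ≥ μ_p(V)`. -/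
theorem kappa_ge_muP
    (hp : p.Prime) (hchar : ringChar K ≠ p)
    (hroot : ∃ ζ : K, IsPrimitiveRoot ζ p)
    (hK : ∀ ζ : K, IsPrimitiveRoot ζ p →
      ∀ q : ℤ, ¬ (p : ℤ) ∣ q → ¬ ∃ x : K, x ^ p = ζ ^ q)
    (M : ZpPersMod K p) :
    muP K p M ≤ kappa K p M := by
  -- kappa is nonnegative
  have hκ0 : 0 ≤ kappa K p M := by
    apply Real.sInf_nonneg
    rintro d ⟨W, _, rfl⟩
    exact Real.sInf_nonneg fun δ hδ => hδ.1.le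
  -- main bound: every element of the muP set is ≤ kappa
  apply Real.sSup_le _ hκ0
  rintro c ⟨hc0, ζ, hζ, a, b, hab, heq, hnd⟩
  -- the kappa set is nonempty
  have hmem : dHatInter K p M (zeroMod K p) ∈
      {d : ℝ | ∃ W : ZpPersMod K p, IsFullPthPower K p W ∧ dHatInter K p M W = d} :=
    ⟨zeroMod K p, zeroMod_isFullPthPower, rfl⟩
  apply le_csInf ⟨_, hmem⟩
  rintro d ⟨W, hWfull, rfl⟩
  obtain ⟨δ₀, hδ₀, hne₀⟩ := exists_interleaving M W
  have hmem2 : δ₀ ∈ {δ : ℝ | 0 < δ ∧ Nonempty (EquivInterleaving K p M W δ)} := ⟨hδ₀, hne₀⟩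
  apply le_csInf ⟨_, hmem2⟩
  rintro δ ⟨hδ0, ⟨I⟩⟩
  by_contra hcδ
  push_neg at hcδ
  -- so δ < c; derive a contradiction
  have hζ1 : ∀ x : K, x ^ p ≠ ζ := by
    intro x hx
    refine hK ζ hζ 1 ?_ ⟨x, by simpa using hx⟩
    intro hdvd
    have h1 : (p : ℤ) ≤ 1 := Int.le_of_dvd one_pos hdvd
    have h2 := hp.two_le
    omega
  set l := eigMult K p M ζ a b with hldef
  have h1 : eigMult K p M ζ a ((b - δ) + δ) ≤ eigMult K p W ζ (a + δ) (b - δ) :=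
    eigMult_le_across hδ0 I ζ a (b - δ) (by linarith)
  rw [show (b - δ) + δ = b by ring] at h1
  have h2 : eigMult K p W ζ (a + δ) ((b - δ - δ) + δ) ≤
      eigMult K p M ζ (a + δ + δ) (b - δ - δ) :=
    eigMult_le_across hδ0 I.symm ζ (a + δ) (b - δ - δ) (by linarith)
  rw [show (b - δ - δ) + δ = b - δ by ring] at h2
  have h3 : eigMult K p M ζ (a + δ + δ) (b - δ - δ) ≤ eigMult K p M ζ (a + 2 * c) (b - 2 * c) :=
    eigMult_mono M ζ (by linarith) (by linarith) (by linarith)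
  have hWl : eigMult K p W ζ (a + δ) (b - δ) = l := by
    have := heq
    omega
  have hdvd := dvd_eigMult_of_fullPthPower hp W hWfull ζ hζ1 (a + δ) (b - δ)
  rw [hWl] at hdvd
  exact hnd hdvd
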